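/- arXiv:math/0610004 — 4 statements merged into one kernel-verified Lean document; each statement's English description precedes it below -/
import Mathlib

section
/- Let n ≥ 1 and let A, ν, W_t, 𝒜_t and Π_ν be as in the context. Then the rescaled amoebas (1/log t)·𝒜_t converge to the tropical amoeba Π_ν in the Hausdorff sense: for every ε > 0 there exists t₀ > 1 such that for all t ≥ t₀, every point of 𝒜_t lies within Euclidean distance ε·log t of the set (log t)·Π_ν = {(log t)·v : v ∈ Π_ν}, and every point of (log t)·Π_ν lies within Euclidean distance ε·log t of 𝒜_t. -/
open scoped BigOperators

/-- The Laurent monomial `z^α = z₁^{a₁} ⋯ zₙ^{aₙ}` with integer exponents. -/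
noncomputable def laurentMonomial {n : ℕ} (α : Fin n → ℤ) (z : Fin n → ℂ) : ℂ :=
  ∏ i, z i ^ α i

/-- The Laurent polynomial `W_t(z) = -1 + ∑_{α ∈ A, α ≠ 0} t^{-ν(α)} z^α`. -/
noncomputable def Wfam {n : ℕ} (A : Finset (Fin n → ℤ)) (ν : (Fin n → ℤ) → ℝ)
    (t : ℝ) (z : Fin n → ℂ) : ℂ :=
  -1 + ∑ α ∈ A.filter (fun α => α ≠ 0), ((t ^ (-ν α) : ℝ) : ℂ) * laurentMonomial α z

/-- The logarithm map `Log(z) = (log |z₁|, …, log |zₙ|)`, valued in Euclidean space. -/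
noncomputable def LogMap {n : ℕ} (z : Fin n → ℂ) : EuclideanSpace ℝ (Fin n) :=
  WithLp.toLp 2 (fun i => Real.log ‖z i‖)

/-- The tropical amoeba `Π_ν`: points where `max_{α ∈ A} (⟨u, α⟩ - ν(α))` is attained
by at least two elements of `A`. -/
def tropAmoeba {n : ℕ} (A : Finset (Fin n → ℤ)) (ν : (Fin n → ℤ) → ℝ) :
    Set (EuclideanSpace ℝ (Fin n)) :=
  {u | ∃ α ∈ A, ∃ β ∈ A, α ≠ β ∧
      (∑ i, u i * (α i : ℝ)) - ν α = (∑ i, u i * (β i : ℝ)) - ν β ∧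
      ∀ γ ∈ A, (∑ i, u i * (γ i : ℝ)) - ν γ ≤ (∑ i, u i * (α i : ℝ)) - ν α}

/-!
Write `L = log t`. If `W_t(z) = 0`, the terms of `W_t` have moduli `exp (L · (⟨v, γ⟩ - ν γ))`
with `v = Log z / L`; since they sum to zero, the largest is at most `#A` times the second
largest. So at `v` the largest tropical term, indexed by `α`, exceeds some other one, indexed by
`β`, by at most `log #A / L`; moving `v` in the direction `β - α` until `α` first ties with
another exponent reaches `Π_ν` within that distance.

Conversely, for `v ∈ Π_ν` restrict `W_t` to the curve `z_i = t^{v_i} w^{e_i}`, where `e`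
separates the exponents in `A`. Up to a power of `w` this is a polynomial in `w` whose
coefficients have moduli `t^{⟨v, γ⟩ - ν γ}`, two of them maximal. Such a polynomial has a root
with `R⁻¹ ≤ |w| ≤ R`, `R` depending only on the degree: otherwise, splitting the roots into small
and large ones, the coefficient indexed by the number of small roots would strictly dominate all
the others. Both errors are thus `O(1) = o(log t)`.
-/

theorem Finset.prod_zpow_eq_zpow_sum₀ {ι G₀ : Type*} [CommGroupWithZero G₀] {a : G₀} (ha : a ≠ 0)
    (s : Finset ι) (f : ι → ℤ) : ∏ i ∈ s, a ^ f i = a ^ ∑ i ∈ s, f i := by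
  classical
  induction s using Finset.induction_on with
  | empty => simp
  | insert i s hi ih => rw [Finset.prod_insert hi, Finset.sum_insert hi, zpow_add₀ ha, ih]

theorem exists_forall_ge_le_mul_log (C : ℝ) {ε : ℝ} (hε : 0 < ε) :
    ∃ t₀ > 1, ∀ t ≥ t₀, C ≤ ε * Real.log t := by
  refine ⟨max 2 (Real.exp (C / ε)), one_lt_two.trans_le (le_max_left _ _), fun t ht => ?_⟩
  have ht0 : 0 < t := two_pos.trans_le ((le_max_left _ _).trans ht)
  rw [← div_le_iff₀' hε, Real.le_log_iff_exp_le ht0]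
  exact (le_max_right _ _).trans ht

theorem exists_ne_sub_le_log_card_of_sum_eq_zero {ι E : Type*} [SeminormedAddCommGroup E]
    {s : Finset ι} {f : ι → E} (hf : ∑ γ ∈ s, f γ = 0) {g : ι → ℝ}
    (hfg : ∀ γ ∈ s, ‖f γ‖ = Real.exp (g γ)) {α : ι} (hα : α ∈ s) :
    ∃ β ∈ s, β ≠ α ∧ g α - g β ≤ Real.log s.card := by
  classical
  have hαle : Real.exp (g α) ≤ ∑ γ ∈ s.erase α, ‖f γ‖ := by
    rw [← hfg α hα, eq_neg_of_add_eq_zero_left ((s.add_sum_erase f hα).trans hf), norm_neg]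
    exact norm_sum_le _ _
  obtain ⟨β, hβ, hβmax⟩ := (s.erase α).exists_max_image g <|
    Finset.nonempty_iff_ne_empty.mpr fun h => by
      rw [h, Finset.sum_empty] at hαle
      exact (Real.exp_pos _).not_ge hαle
  refine ⟨β, Finset.mem_of_mem_erase hβ, Finset.ne_of_mem_erase hβ, ?_⟩
  have hcard : (0 : ℝ) < s.card := by exact_mod_cast Finset.card_pos.mpr ⟨α, hα⟩
  rw [sub_le_iff_le_add, ← Real.exp_le_exp, Real.exp_add, Real.exp_log hcard]
  calc Real.exp (g α) ≤ ∑ γ ∈ s.erase α, ‖f γ‖ := hαle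
    _ ≤ ∑ γ ∈ s.erase α, Real.exp (g β) := Finset.sum_le_sum fun γ hγ => by
        rw [hfg γ (Finset.mem_of_mem_erase hγ)]
        exact Real.exp_le_exp.mpr (hβmax γ hγ)
    _ ≤ s.card * Real.exp (g β) := by
        rw [Finset.sum_const, nsmul_eq_mul]
        gcongr
        exact Finset.erase_subset α s

open Polynomial in
theorem exists_injOn_dotProduct {n : ℕ} (A : Finset (Fin n → ℤ)) :
    ∃ e : Fin n → ℤ, Set.InjOn (e ⬝ᵥ ·) A := by
  classical
  -- With `e = (1, b, b², …)`, `e ⬝ᵥ d` is the value at `b` of the polynomial with coefficients `d`.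
  set q : (Fin n → ℤ) → ℤ[X] := fun d => ∑ i, C (d i) * X ^ (i : ℕ)
  have hq_eval (d : Fin n → ℤ) (b : ℤ) : (q d).eval b = (fun i : Fin n => b ^ (i : ℕ)) ⬝ᵥ d := by
    simp only [q, eval_finsetSum, eval_mul, eval_C, eval_pow, eval_X, dotProduct, mul_comm]
  have hq_ne {d : Fin n → ℤ} (hd : d ≠ 0) : q d ≠ 0 := by
    obtain ⟨j, hj⟩ := Function.ne_iff.mp hd
    refine fun h => hj ?_
    have hcoeff := congrArg (coeff · (j : ℕ)) h
    simp only [q, finsetSum_coeff, coeff_C_mul_X_pow, coeff_zero] at hcoeff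
    rwa [Finset.sum_eq_single j (fun i _ hij => if_neg fun h => hij (Fin.ext h.symm))
      (by simp), if_pos rfl] at hcoeff
  set bad : Finset ℤ := ((A ×ˢ A).filter fun p => p.1 ≠ p.2).biUnion
    fun p => (q (p.1 - p.2)).roots.toFinset
  obtain ⟨b, hb⟩ := Infinite.exists_notMem_finset bad
  refine ⟨fun i => b ^ (i : ℕ), fun γ hγ δ hδ hγδ => by_contra fun hne => hb ?_⟩
  refine Finset.mem_biUnion.mpr
    ⟨(γ, δ), Finset.mem_filter.mpr ⟨Finset.mem_product.mpr ⟨hγ, hδ⟩, hne⟩, ?_⟩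
  rw [Multiset.mem_toFinset, mem_roots (hq_ne (sub_ne_zero.mpr hne)), IsRoot, hq_eval,
    dotProduct_sub, sub_eq_zero]
  exact hγδ

section RootAnnulus

open Polynomial

variable {K : Type*} [NormedField K]

theorem norm_coeff_prod_X_sub_C_mul_pow_le (r : ℝ) (hr : 0 ≤ r) (s : Multiset K) (j : ℕ) :
    ‖((s.map (X - C ·)).prod).coeff j‖ * r ^ j ≤
      s.card.choose j * (s.map fun ρ => max r ‖ρ‖).prod := by
  induction s using Multiset.induction generalizing j with
  | empty => rcases j with _ | j <;> simp [coeff_one]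
  | cons ρ s ih =>
    set P := (s.map (X - C ·)).prod
    have hprod : 0 ≤ (s.map fun ρ => max r ‖ρ‖).prod :=
      Multiset.prod_nonneg fun x hx => by
        obtain ⟨ρ', -, rfl⟩ := Multiset.mem_map.mp hx
        exact le_max_of_le_left hr
    have hr' : r ≤ max r ‖ρ‖ := le_max_left _ _
    have hρ : ‖ρ‖ ≤ max r ‖ρ‖ := le_max_right _ _
    simp only [Multiset.map_cons, Multiset.prod_cons, Multiset.card_cons]
    rcases j with _ | k
    · have h := ih 0
      simp only [pow_zero, mul_one, Nat.choose_zero_right, Nat.cast_one, one_mul] at h ⊢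
      rw [mul_coeff_zero, coeff_sub, coeff_X_zero, coeff_C_zero, zero_sub, norm_mul, norm_neg]
      exact mul_le_mul hρ h (norm_nonneg _) (hr.trans hr')
    · have h₁ := ih k
      have h₂ := ih (k + 1)
      rw [coeff_X_sub_C_mul, Nat.choose_succ_succ', Nat.cast_add]
      calc ‖P.coeff k - ρ * P.coeff (k + 1)‖ * r ^ (k + 1)
          ≤ r * (‖P.coeff k‖ * r ^ k) + ‖ρ‖ * (‖P.coeff (k + 1)‖ * r ^ (k + 1)) := by
            have h := norm_sub_le (P.coeff k) (ρ * P.coeff (k + 1))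
            rw [norm_mul] at h
            exact (mul_le_mul_of_nonneg_right h (pow_nonneg hr (k + 1))).trans_eq (by ring)
        _ ≤ max r ‖ρ‖ * (s.card.choose k * (s.map fun ρ => max r ‖ρ‖).prod) +
            max r ‖ρ‖ * (s.card.choose (k + 1) * (s.map fun ρ => max r ‖ρ‖).prod) := by
            gcongr
        _ = _ := by ring

theorem norm_coeff_prod_X_sub_C_le {r : ℝ} (hr : 0 < r) {s : Multiset K}
    (hs : ∀ ρ ∈ s, ‖ρ‖ ≤ r) (a : ℕ) :
    ‖((s.map (X - C ·)).prod).coeff a‖ ≤ s.card.choose a * r ^ (s.card - a) := by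
  have h := norm_coeff_prod_X_sub_C_mul_pow_le r hr.le s a
  rw [Multiset.map_congr rfl fun ρ hρ => max_eq_left (hs ρ hρ), Multiset.map_const',
    Multiset.prod_replicate] at h
  rcases le_or_gt a s.card with has | has
  · rw [← Nat.sub_add_cancel has, pow_add, ← mul_assoc, Nat.sub_add_cancel has] at h
    exact le_of_mul_le_mul_right h (pow_pos hr a)
  · rw [Nat.choose_eq_zero_of_lt has, Nat.cast_zero, zero_mul] at h ⊢
    exact nonpos_of_mul_nonpos_left h (pow_pos hr a)

theorem norm_coeff_prod_X_sub_C_mul_pow_le_prod_norm {R : ℝ} (hR : 0 ≤ R) {s : Multiset K}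
    (hs : ∀ ρ ∈ s, R ≤ ‖ρ‖) (b : ℕ) :
    ‖((s.map (X - C ·)).prod).coeff b‖ * R ^ b ≤ s.card.choose b * (s.map (‖·‖)).prod := by
  simpa only [Multiset.map_congr rfl fun ρ hρ => max_eq_right (hs ρ hρ)] using
    norm_coeff_prod_X_sub_C_mul_pow_le R hR s b

theorem norm_coeff_zero_prod_X_sub_C (s : Multiset K) :
    ‖((s.map (X - C ·)).prod).coeff 0‖ = (s.map (‖·‖)).prod := by
  simp only [coeff_zero_eq_eval_zero, eval_multiset_prod, Multiset.map_map]
  simpa using map_multiset_prod (normHom : K →*₀ ℝ) s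

open Finset in
theorem norm_coeff_mul_sub_le (p q : K[X]) {η : ℝ} (hη : 0 ≤ η) (s k : ℕ)
    (h : ∀ a b, a + b = k → (a, b) ≠ (s, 0) → ‖p.coeff a * q.coeff b‖ ≤ η) :
    ‖(p * q).coeff k - if k = s then p.coeff s * q.coeff 0 else 0‖ ≤ (k + 1) * η := by
  classical
  have hsum : (p * q).coeff k - (if k = s then p.coeff s * q.coeff 0 else 0) =
      ∑ x ∈ (antidiagonal k).erase (s, 0), p.coeff x.1 * q.coeff x.2 := by
    rw [coeff_mul]
    split_ifs with hks
    · subst hks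
      rw [← Finset.add_sum_erase _ _ (by simp : (k, 0) ∈ antidiagonal k)]
      ring
    · rw [sub_zero, Finset.erase_eq_of_notMem (by simpa using Ne.symm hks)]
  rw [hsum]
  calc _ ≤ ∑ x ∈ (antidiagonal k).erase (s, 0), η :=
        (norm_sum_le _ _).trans <| Finset.sum_le_sum fun x hx => by
          obtain ⟨hxs, hx⟩ := Finset.mem_erase.mp hx
          exact h x.1 x.2 (mem_antidiagonal.mp hx) hxs
    _ ≤ (k + 1) * η := by
        rw [Finset.sum_const, nsmul_eq_mul]
        gcongr
        exact_mod_cast (Finset.card_erase_le).trans (Finset.Nat.card_antidiagonal k).le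

theorem norm_coeff_mul_coeff_prod_X_sub_C_le {r : ℝ} (hr0 : 0 < r) (hr1 : r ≤ 1) {S L : Multiset K}
    (hS : ∀ ρ ∈ S, ‖ρ‖ ≤ r) (hL : ∀ ρ ∈ L, r⁻¹ ≤ ‖ρ‖) {a b : ℕ} (hab : (a, b) ≠ (S.card, 0)) :
    ‖((S.map (X - C ·)).prod).coeff a * ((L.map (X - C ·)).prod).coeff b‖ ≤
      2 ^ (S.card + L.card) * (L.map (‖·‖)).prod * r := by
  set π := (L.map (‖·‖)).prod
  have hπ : 0 ≤ π := Multiset.prod_nonneg fun x hx => by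
    obtain ⟨ρ, -, rfl⟩ := Multiset.mem_map.mp hx
    exact norm_nonneg ρ
  have hSa := norm_coeff_prod_X_sub_C_le hr0 hS a
  have hLb : ‖((L.map (X - C ·)).prod).coeff b‖ ≤ L.card.choose b * π * r ^ b := by
    have h := norm_coeff_prod_X_sub_C_mul_pow_le_prod_norm (inv_nonneg.mpr hr0.le) hL b
    rwa [inv_pow, ← div_eq_mul_inv, div_le_iff₀ (pow_pos hr0 b)] at h
  rw [norm_mul]
  rcases le_or_gt a S.card with has | has
  · have hab' : a ≠ S.card ∨ b ≠ 0 := by rwa [Ne, Prod.ext_iff, not_and_or] at hab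
    have hexp : r ^ (S.card - a) * r ^ b ≤ r :=
      (pow_add r _ _).symm.trans_le <| pow_le_of_le_one hr0.le hr1 (by omega)
    have hchoose : (S.card.choose a : ℝ) * L.card.choose b ≤ 2 ^ (S.card + L.card) := by
      rw [pow_add]
      exact_mod_cast Nat.mul_le_mul (Nat.choose_le_two_pow _ _) (Nat.choose_le_two_pow _ _)
    calc _ ≤ (S.card.choose a * r ^ (S.card - a)) * (L.card.choose b * π * r ^ b) :=
          mul_le_mul hSa hLb (norm_nonneg _) (by positivity)
      _ = (S.card.choose a * L.card.choose b) * π * (r ^ (S.card - a) * r ^ b) := by ring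
      _ ≤ 2 ^ (S.card + L.card) * π * r := by gcongr
  · rw [Nat.choose_eq_zero_of_lt has, Nat.cast_zero, zero_mul] at hSa
    rw [le_antisymm hSa (norm_nonneg _), zero_mul]
    positivity

theorem norm_coeff_prod_X_sub_C_mul_prod_sub_le {r : ℝ} (hr0 : 0 < r) (hr1 : r ≤ 1)
    {S L : Multiset K} (hS : ∀ ρ ∈ S, ‖ρ‖ ≤ r) (hL : ∀ ρ ∈ L, r⁻¹ ≤ ‖ρ‖) (k : ℕ) :
    ‖((S.map (X - C ·)).prod * (L.map (X - C ·)).prod).coeff k -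
        if k = S.card then ((L.map (X - C ·)).prod).coeff 0 else 0‖ ≤
      (k + 1) * (2 ^ (S.card + L.card) * (L.map (‖·‖)).prod * r) := by
  have hπ : 0 ≤ (L.map (‖·‖)).prod := Multiset.prod_nonneg fun x hx => by
    obtain ⟨ρ, -, rfl⟩ := Multiset.mem_map.mp hx
    exact norm_nonneg ρ
  have hSm : ((S.map (X - C ·)).prod).coeff S.card = 1 := by
    simpa [natDegree_multiset_prod_X_sub_C_eq_card] using
      (monic_multiset_prod_of_monic S (X - C ·) fun ρ _ => monic_X_sub_C ρ).coeff_natDegree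
  have h := norm_coeff_mul_sub_le _ _ (by positivity) S.card k
    fun a b _ hab => norm_coeff_mul_coeff_prod_X_sub_C_le hr0 hr1 hS hL hab
  rwa [hSm, one_mul] at h

theorem coeff_sum_C_mul_X_pow_of_injOn {ι : Type*} {s : Finset ι} {idx : ι → ℕ}
    (hidx : Set.InjOn idx s) (a : ι → K) {γ : ι} (hγ : γ ∈ s) :
    (∑ δ ∈ s, C (a δ) * X ^ idx δ).coeff (idx γ) = a γ := by
  rw [finsetSum_coeff, Finset.sum_eq_single γ (fun δ hδ hδγ => by
    rw [coeff_C_mul_X_pow, if_neg fun h => hδγ (hidx hδ hγ h.symm)]) (absurd hγ),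
    coeff_C_mul_X_pow, if_pos rfl]

theorem norm_coeff_sum_C_mul_X_pow_le {ι : Type*} {s : Finset ι} {idx : ι → ℕ}
    (hidx : Set.InjOn idx s) {a : ι → K} {c : ℝ} (hc : 0 ≤ c) (ha : ∀ γ ∈ s, ‖a γ‖ ≤ c)
    (k : ℕ) : ‖(∑ γ ∈ s, C (a γ) * X ^ idx γ).coeff k‖ ≤ c := by
  by_cases hk : ∃ γ ∈ s, idx γ = k
  · obtain ⟨γ, hγ, rfl⟩ := hk
    rw [coeff_sum_C_mul_X_pow_of_injOn hidx a hγ]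
    exact ha γ hγ
  · push Not at hk
    rw [finsetSum_coeff, Finset.sum_eq_zero fun γ hγ => by
      rw [coeff_C_mul_X_pow, if_neg (hk γ hγ).symm], norm_zero]
    exact hc

variable [IsAlgClosed K]

theorem eq_C_leadingCoeff_mul_prod_filter_roots (P : K[X]) (p : K → Prop) [DecidablePred p] :
    P = C P.leadingCoeff * (((P.roots.filter p).map (X - C ·)).prod *
      ((P.roots.filter (¬ p ·)).map (X - C ·)).prod) := by
  conv_lhs => rw [(IsAlgClosed.splits P).eq_prod_roots, ← Multiset.filter_add_not p P.roots,
    Multiset.map_add, Multiset.prod_add]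

theorem exists_dominant_coeff_of_no_root_in_annulus {P : K[X]} (hP : P ≠ 0) {d : ℕ}
    (hd : P.natDegree ≤ d) {r : ℝ} (hr0 : 0 < r) (hr : 4 * (d + 1) * 2 ^ d * r ≤ 1)
    (hroots : ∀ w, P.IsRoot w → ‖w‖ < r ∨ r⁻¹ ≤ ‖w‖) :
    ∃ s : ℕ, ∃ M > 0, 3 / 4 * M ≤ ‖P.coeff s‖ ∧ ∀ k ≠ s, ‖P.coeff k‖ ≤ M / 4 := by
  classical
  set S := P.roots.filter (‖·‖ < r)
  set L := P.roots.filter (¬ ‖·‖ < r)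
  have hS : ∀ ρ ∈ S, ‖ρ‖ ≤ r := fun ρ hρ => (Multiset.of_mem_filter hρ).le
  have hL : ∀ ρ ∈ L, r⁻¹ ≤ ‖ρ‖ := fun ρ hρ =>
    have hρ := Multiset.mem_filter.mp hρ
    (hroots ρ (isRoot_of_mem_roots hρ.1)).resolve_left hρ.2
  set Sm := (S.map (X - C ·)).prod
  set La := (L.map (X - C ·)).prod
  set π := (L.map (‖·‖)).prod
  have hfac : P = C P.leadingCoeff * (Sm * La) := eq_C_leadingCoeff_mul_prod_filter_roots P _
  have hcard : S.card + L.card ≤ d := by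
    rw [← Multiset.card_add, Multiset.filter_add_not,
      ← (IsAlgClosed.splits P).natDegree_eq_card_roots]
    exact hd
  have hπ : 0 < π := Multiset.prod_pos fun x hx => by
    obtain ⟨ρ, hρ, rfl⟩ := Multiset.mem_map.mp hx
    exact (inv_pos.mpr hr0).trans_le (hL ρ hρ)
  have hr1 : r ≤ 1 := by
    have h4 : (1 : ℝ) ≤ (d + 1) * 2 ^ d :=
      one_le_mul_of_one_le_of_one_le (by linarith [d.cast_nonneg (α := ℝ)]) (one_le_pow₀ one_le_two)
    nlinarith [mul_le_mul_of_nonneg_right h4 hr0.le]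
  have hdom {k : ℕ} (hk : k ≤ d) :
      ‖(Sm * La).coeff k - if k = S.card then La.coeff 0 else 0‖ ≤ π / 4 := by
    refine (norm_coeff_prod_X_sub_C_mul_prod_sub_le hr0 hr1 hS hL k).trans ?_
    have hk' : (k : ℝ) + 1 ≤ d + 1 := by exact_mod_cast Nat.succ_le_succ hk
    calc (k + 1) * (2 ^ (S.card + L.card) * π * r) ≤ (d + 1) * (2 ^ d * π * r) := by
          gcongr
          exact one_le_two
      _ = 4 * (d + 1) * 2 ^ d * r * π / 4 := by ring
      _ ≤ π / 4 := by gcongr; exact mul_le_of_le_one_left hπ.le hr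
  have hcoeff (k : ℕ) : ‖P.coeff k‖ = ‖P.leadingCoeff‖ * ‖(Sm * La).coeff k‖ := by
    conv_lhs => rw [hfac, coeff_C_mul, norm_mul]
  have hlc : 0 < ‖P.leadingCoeff‖ := norm_pos_iff.mpr (leadingCoeff_ne_zero.mpr hP)
  refine ⟨S.card, ‖P.leadingCoeff‖ * π, by positivity, ?_, fun k hk => ?_⟩
  · have h := hdom (S.card.le_add_right _ |>.trans hcard)
    rw [if_pos rfl] at h
    have h' := (norm_sub_norm_le _ _).trans (norm_sub_rev (La.coeff 0) _ ▸ h)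
    rw [norm_coeff_zero_prod_X_sub_C] at h'
    rw [hcoeff]
    nlinarith
  · rcases le_or_gt k d with hkd | hkd
    · have h := hdom hkd
      rw [if_neg hk, sub_zero] at h
      rw [hcoeff]
      nlinarith
    · rw [coeff_eq_zero_of_natDegree_lt (hd.trans_lt hkd), norm_zero]
      positivity

theorem exists_isRoot_mem_annulus_of_two_max_coeff {P : K[X]} {d : ℕ} (hd : P.natDegree ≤ d)
    {c : ℝ} (hc : 0 < c) (hle : ∀ k, ‖P.coeff k‖ ≤ c) {i j : ℕ} (hij : i ≠ j)
    (hi : ‖P.coeff i‖ = c) (hj : ‖P.coeff j‖ = c) :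
    ∃ w, P.IsRoot w ∧ (4 * (d + 1) * 2 ^ d : ℝ)⁻¹ ≤ ‖w‖ ∧ ‖w‖ ≤ 4 * (d + 1) * 2 ^ d := by
  set R : ℝ := 4 * (d + 1) * 2 ^ d
  have hR : 0 < R := by positivity
  by_contra! h
  have hP : P ≠ 0 := by
    rintro rfl
    simp only [coeff_zero, norm_zero] at hi
    exact hc.ne hi
  obtain ⟨s, M, hM, hs, hk⟩ := exists_dominant_coeff_of_no_root_in_annulus hP hd
    (inv_pos.mpr hR) (mul_inv_cancel₀ hR.ne').le fun w hw => by
      rw [inv_inv]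
      exact (lt_or_ge ‖w‖ R⁻¹).imp id fun h' => (h w hw h').le
  obtain ⟨k, hks, hkc⟩ : ∃ k ≠ s, ‖P.coeff k‖ = c := by
    rcases eq_or_ne i s with rfl | his
    exacts [⟨j, hij.symm, hj⟩, ⟨i, his, hi⟩]
  linarith [hk k hks, hle s]

theorem exists_ne_zero_sum_mul_zpow_eq_zero {ι : Type*} {s : Finset ι} {m : ι → ℤ}
    (hm : Set.InjOn m s) {B : ℕ} (hB : ∀ γ ∈ s, (m γ).natAbs ≤ B) {a : ι → K} {c : ℝ}
    (hc : 0 < c) (hle : ∀ γ ∈ s, ‖a γ‖ ≤ c) {α β : ι} (hα : α ∈ s) (hβ : β ∈ s)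
    (hαβ : α ≠ β) (haα : ‖a α‖ = c) (haβ : ‖a β‖ = c) :
    ∃ w : K, w ≠ 0 ∧ ∑ γ ∈ s, a γ * w ^ m γ = 0 ∧
      |Real.log ‖w‖| ≤ Real.log (4 * (2 * B + 1) * 2 ^ (2 * B)) := by
  classical
  set idx : ι → ℕ := fun γ => (m γ + B).toNat
  have hidx {γ} (hγ : γ ∈ s) : (idx γ : ℤ) = m γ + B :=
    Int.toNat_of_nonneg (by have := hB γ hγ; omega)
  have hidx_inj : Set.InjOn idx s := fun γ hγ δ hδ h =>
    hm hγ hδ (by have := congrArg (Nat.cast : ℕ → ℤ) h; rw [hidx hγ, hidx hδ] at this; omega)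
  set P : K[X] := ∑ γ ∈ s, C (a γ) * X ^ idx γ
  have hcoeff_idx {γ} (hγ : γ ∈ s) : P.coeff (idx γ) = a γ :=
    coeff_sum_C_mul_X_pow_of_injOn hidx_inj a hγ
  have hdeg : P.natDegree ≤ 2 * B := natDegree_sum_le_of_forall_le _ _ fun γ hγ =>
    (natDegree_C_mul_X_pow_le _ _).trans (by have := hidx hγ; have := hB γ hγ; omega)
  obtain ⟨w, hw, hwR, hRw⟩ := exists_isRoot_mem_annulus_of_two_max_coeff hdeg hc
    (norm_coeff_sum_C_mul_X_pow_le hidx_inj hc.le hle)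
    (fun h => hαβ (hidx_inj hα hβ h)) ((hcoeff_idx hα).symm ▸ haα) ((hcoeff_idx hβ).symm ▸ haβ)
  set R : ℝ := 4 * (2 * B + 1) * 2 ^ (2 * B)
  have hR : (4 * (((2 * B : ℕ) : ℝ) + 1) * 2 ^ (2 * B)) = R := by push_cast; ring
  rw [hR] at hwR hRw
  have hw0 : 0 < ‖w‖ := (inv_pos.mpr (by positivity : (0 : ℝ) < R)).trans_le hwR
  have hw0' : w ≠ 0 := norm_pos_iff.mp hw0
  refine ⟨w, hw0', ?_, abs_le.mpr ⟨?_, ?_⟩⟩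
  · have heval : P.eval w = ∑ γ ∈ s, a γ * w ^ m γ * w ^ (B : ℤ) := by
      simp only [P, eval_finsetSum, eval_mul, eval_C, eval_pow, eval_X]
      refine Finset.sum_congr rfl fun γ hγ => ?_
      rw [mul_assoc, ← zpow_add₀ hw0', ← hidx hγ, zpow_natCast]
    rw [← Finset.sum_mul, hw.eq_zero] at heval
    exact (mul_eq_zero.mp heval.symm).resolve_right (zpow_ne_zero _ hw0')
  · rw [neg_le, ← Real.log_inv]
    exact Real.log_le_log (by positivity) (inv_le_of_inv_le₀ (by positivity) hwR)
  · exact Real.log_le_log hw0 hRw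

end RootAnnulus

section Amoeba

open scoped InnerProductSpace

variable {n : ℕ}

def intVec (γ : Fin n → ℤ) : EuclideanSpace ℝ (Fin n) := WithLp.toLp 2 fun i => (γ i : ℝ)

theorem intVec_sub (γ δ : Fin n → ℤ) : intVec (γ - δ) = intVec γ - intVec δ := by
  ext i
  simp [intVec]

theorem one_le_norm_intVec {γ : Fin n → ℤ} (hγ : γ ≠ 0) : 1 ≤ ‖intVec γ‖ := by
  obtain ⟨i, hi⟩ := Function.ne_iff.mp hγ
  calc (1 : ℝ) ≤ |(γ i : ℝ)| := by exact_mod_cast Int.one_le_abs hi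
    _ ≤ ‖intVec γ‖ := PiLp.norm_apply_le (intVec γ) i

theorem sum_mul_intCast_eq_inner (u : EuclideanSpace ℝ (Fin n)) (γ : Fin n → ℤ) :
    ∑ i, u i * (γ i : ℝ) = ⟪u, intVec γ⟫_ℝ := by
  simp [EuclideanSpace.inner_eq_star_dotProduct, dotProduct, intVec, mul_comm]

noncomputable def tropTerm (ν : (Fin n → ℤ) → ℝ) (γ : Fin n → ℤ) (u : EuclideanSpace ℝ (Fin n)) :
    ℝ :=
  ⟪u, intVec γ⟫_ℝ - ν γ

theorem mem_tropAmoeba_iff {A : Finset (Fin n → ℤ)} {ν : (Fin n → ℤ) → ℝ}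
    {u : EuclideanSpace ℝ (Fin n)} :
    u ∈ tropAmoeba A ν ↔ ∃ α ∈ A, ∃ β ∈ A, α ≠ β ∧ tropTerm ν α u = tropTerm ν β u ∧
      ∀ γ ∈ A, tropTerm ν γ u ≤ tropTerm ν α u := by
  simp only [tropTerm, ← sum_mul_intCast_eq_inner]
  rfl

theorem tropTerm_add_smul (ν : (Fin n → ℤ) → ℝ) (γ : Fin n → ℤ) (u e : EuclideanSpace ℝ (Fin n))
    (s : ℝ) : tropTerm ν γ (u + s • e) = tropTerm ν γ u + s * ⟪e, intVec γ⟫_ℝ := by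
  simp only [tropTerm, inner_add_left, real_inner_smul_left]
  ring

theorem exists_mem_Icc_add_smul_mem_tropAmoeba {A : Finset (Fin n → ℤ)} {ν : (Fin n → ℤ) → ℝ}
    {v e : EuclideanSpace ℝ (Fin n)} {α β : Fin n → ℤ} (hα : α ∈ A) (hβ : β ∈ A) (hαβ : α ≠ β)
    (hmax : ∀ γ ∈ A, tropTerm ν γ v ≤ tropTerm ν α v) {s₁ : ℝ} (hs₁ : 0 ≤ s₁)
    (htie : tropTerm ν α (v + s₁ • e) ≤ tropTerm ν β (v + s₁ • e)) :
    ∃ s ∈ Set.Icc 0 s₁, v + s • e ∈ tropAmoeba A ν := by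
  classical
  have hβ' : β ∈ A.erase α := Finset.mem_erase.mpr ⟨hαβ.symm, hβ⟩
  have hne : (A.erase α).Nonempty := ⟨β, hβ'⟩
  set g : ℝ → ℝ := fun s =>
    tropTerm ν α (v + s • e) - (A.erase α).sup' hne fun γ => tropTerm ν γ (v + s • e)
  have hg : Continuous g := by
    have hcont (γ : Fin n → ℤ) : Continuous fun s : ℝ => tropTerm ν γ (v + s • e) := by
      simp only [tropTerm_add_smul]
      fun_prop
    exact (hcont α).sub (Continuous.finset_sup'_apply hne fun γ _ => hcont γ)
  have hg0 : 0 ≤ g 0 := by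
    simp only [g, zero_smul, add_zero, sub_nonneg]
    exact Finset.sup'_le _ _ fun γ hγ => hmax γ (Finset.mem_of_mem_erase hγ)
  have hgs₁ : g s₁ ≤ 0 :=
    sub_nonpos.mpr (htie.trans (Finset.le_sup' (fun γ => tropTerm ν γ (v + s₁ • e)) hβ'))
  obtain ⟨s, hs, hgs⟩ := intermediate_value_Icc' hs₁ hg.continuousOn ⟨hgs₁, hg0⟩
  obtain ⟨γ, hγ, hγsup⟩ := Finset.exists_mem_eq_sup' hne fun γ => tropTerm ν γ (v + s • e)
  have hαγ : tropTerm ν α (v + s • e) = tropTerm ν γ (v + s • e) := by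
    simp only [g] at hgs
    linarith
  refine ⟨s, hs, mem_tropAmoeba_iff.mpr ⟨α, hα, γ, Finset.mem_of_mem_erase hγ,
    (Finset.ne_of_mem_erase hγ).symm, hαγ, fun δ hδ => ?_⟩⟩
  rcases eq_or_ne δ α with rfl | hδα
  · exact le_rfl
  · exact hαγ ▸ hγsup ▸ Finset.le_sup' (fun γ => tropTerm ν γ (v + s • e))
      (Finset.mem_erase.mpr ⟨hδα, hδ⟩)

theorem exists_mem_tropAmoeba_dist_le {A : Finset (Fin n → ℤ)} {ν : (Fin n → ℤ) → ℝ}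
    {v : EuclideanSpace ℝ (Fin n)} {α β : Fin n → ℤ} (hα : α ∈ A) (hβ : β ∈ A) (hαβ : α ≠ β)
    (hmax : ∀ γ ∈ A, tropTerm ν γ v ≤ tropTerm ν α v) :
    ∃ w ∈ tropAmoeba A ν, dist v w ≤ tropTerm ν α v - tropTerm ν β v := by
  set e := intVec (β - α)
  set Δ := tropTerm ν α v - tropTerm ν β v
  have hΔ : 0 ≤ Δ := sub_nonneg.mpr (hmax β hβ)
  have he : 1 ≤ ‖e‖ := one_le_norm_intVec (sub_ne_zero.mpr hαβ.symm)
  have hgap : ⟪e, intVec β⟫_ℝ - ⟪e, intVec α⟫_ℝ = ‖e‖ ^ 2 := by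
    rw [← inner_sub_right, ← intVec_sub, real_inner_self_eq_norm_sq]
  set s₁ := Δ / ‖e‖ ^ 2
  have hs₁ : s₁ * ‖e‖ ^ 2 = Δ := div_mul_cancel₀ Δ (by positivity)
  have htie : tropTerm ν α (v + s₁ • e) = tropTerm ν β (v + s₁ • e) := by
    rw [tropTerm_add_smul, tropTerm_add_smul]
    linear_combination (-s₁) * hgap - hs₁
  obtain ⟨s, ⟨hs0, hss₁⟩, hmem⟩ := exists_mem_Icc_add_smul_mem_tropAmoeba hα hβ hαβ hmax
    (div_nonneg hΔ (by positivity)) htie.le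
  refine ⟨v + s • e, hmem, ?_⟩
  rw [dist_self_add_right, norm_smul, Real.norm_of_nonneg hs0]
  calc s * ‖e‖ ≤ s₁ * ‖e‖ := by gcongr
    _ = Δ / ‖e‖ := by rw [← hs₁]; field_simp
    _ ≤ Δ := div_le_self hΔ he

theorem norm_laurentMonomial {z : Fin n → ℂ} (hz : ∀ i, z i ≠ 0) (γ : Fin n → ℤ) :
    ‖laurentMonomial γ z‖ = Real.exp ⟪LogMap z, intVec γ⟫_ℝ := by
  rw [← sum_mul_intCast_eq_inner, Real.exp_sum, laurentMonomial, norm_prod]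
  refine Finset.prod_congr rfl fun i _ => ?_
  rw [norm_zpow, ← Real.rpow_intCast, Real.rpow_def_of_pos (norm_pos_iff.mpr (hz i))]
  rfl

theorem Wfam_eq_sum {A : Finset (Fin n → ℤ)} (h0A : 0 ∈ A) {ν : (Fin n → ℤ) → ℝ} (hν : ν 0 = 0)
    (t : ℝ) (z : Fin n → ℂ) :
    Wfam A ν t z = ∑ γ ∈ A,
      (if γ = 0 then -1 else 1) * (((t ^ (-ν γ) : ℝ) : ℂ) * laurentMonomial γ z) := by
  rw [Wfam, ← Finset.add_sum_erase A _ h0A, ← Finset.filter_ne']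
  congr 1
  · simp [hν, laurentMonomial]
  · exact Finset.sum_congr rfl fun γ hγ => by rw [if_neg (Finset.mem_filter.mp hγ).2, one_mul]

theorem exists_mem_tropAmoeba_dist_logMap_le {A : Finset (Fin n → ℤ)} (h0A : 0 ∈ A)
    {ν : (Fin n → ℤ) → ℝ} (hν : ν 0 = 0) {t : ℝ} (ht : 1 < t) {z : Fin n → ℂ}
    (hz : ∀ i, z i ≠ 0) (hW : Wfam A ν t z = 0) :
    ∃ w ∈ tropAmoeba A ν, dist (LogMap z) (Real.log t • w) ≤ Real.log A.card := by
  have hL : 0 < Real.log t := Real.log_pos ht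
  set v := (Real.log t)⁻¹ • LogMap z
  have hLv : Real.log t • v = LogMap z := smul_inv_smul₀ hL.ne' _
  have hnorm : ∀ γ ∈ A, ‖(if γ = 0 then (-1 : ℂ) else 1) *
      (((t ^ (-ν γ) : ℝ) : ℂ) * laurentMonomial γ z)‖ = Real.exp (Real.log t * tropTerm ν γ v) := by
    intro γ _
    have hsgn : ‖if γ = 0 then (-1 : ℂ) else 1‖ = 1 := by split_ifs <;> simp
    rw [norm_mul, norm_mul, hsgn, one_mul, norm_laurentMonomial hz, Complex.norm_real,
      Real.norm_of_nonneg (by positivity), Real.rpow_def_of_pos (by positivity), ← hLv,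
      real_inner_smul_left, ← Real.exp_add, tropTerm]
    congr 1
    ring
  obtain ⟨α, hα, hαmax⟩ := A.exists_max_image (tropTerm ν · v) ⟨0, h0A⟩
  obtain ⟨β, hβ, hβα, hgap⟩ :=
    exists_ne_sub_le_log_card_of_sum_eq_zero ((Wfam_eq_sum h0A hν t z).symm.trans hW) hnorm hα
  obtain ⟨w, hw, hvw⟩ := exists_mem_tropAmoeba_dist_le hα hβ hβα.symm hαmax
  refine ⟨w, hw, ?_⟩
  calc dist (LogMap z) (Real.log t • w) = Real.log t * dist v w := by
        rw [← hLv, dist_smul₀, Real.norm_of_nonneg hL.le]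
    _ ≤ Real.log t * (tropTerm ν α v - tropTerm ν β v) := by gcongr
    _ ≤ Real.log A.card := (mul_sub _ _ _).trans_le hgap

theorem laurentMonomial_ofReal_rpow_mul_zpow {t : ℝ} (ht : 0 < t) (v : EuclideanSpace ℝ (Fin n))
    {w : ℂ} (hw : w ≠ 0) (e γ : Fin n → ℤ) :
    laurentMonomial γ (fun i => ((t ^ v i : ℝ) : ℂ) * w ^ e i) =
      ((t ^ ⟪v, intVec γ⟫_ℝ : ℝ) : ℂ) * w ^ (e ⬝ᵥ γ) := by
  simp only [laurentMonomial, mul_zpow, Finset.prod_mul_distrib, ← zpow_mul]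
  congr 1
  · rw [← sum_mul_intCast_eq_inner, Real.rpow_sum_of_pos ht, Complex.ofReal_prod]
    refine Finset.prod_congr rfl fun i _ => ?_
    rw [Real.rpow_mul ht.le, Real.rpow_intCast, Complex.ofReal_zpow]
  · rw [Finset.prod_zpow_eq_zpow_sum₀ hw]
    rfl

theorem logMap_ofReal_rpow_mul_zpow {t : ℝ} (ht : 0 < t) (v : EuclideanSpace ℝ (Fin n))
    {w : ℂ} (hw : w ≠ 0) (e : Fin n → ℤ) :
    LogMap (fun i => ((t ^ v i : ℝ) : ℂ) * w ^ e i) = Real.log t • v + Real.log ‖w‖ • intVec e := by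
  have htv (i : Fin n) : 0 < t ^ v i := Real.rpow_pos_of_pos ht _
  ext i
  simp only [LogMap, intVec, PiLp.add_apply, PiLp.smul_apply, PiLp.toLp_apply, smul_eq_mul,
    norm_mul, norm_zpow, Complex.norm_real, Real.norm_of_nonneg (htv i).le]
  rw [Real.log_mul (htv i).ne' (zpow_ne_zero _ (norm_ne_zero_iff.mpr hw)), Real.log_rpow ht,
    Real.log_zpow]
  ring

theorem exists_Wfam_eq_zero_dist_logMap_le {A : Finset (Fin n → ℤ)} (h0A : 0 ∈ A)
    {ν : (Fin n → ℤ) → ℝ} (hν : ν 0 = 0) {t : ℝ} (ht : 1 < t) {e : Fin n → ℤ}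
    (he : Set.InjOn (e ⬝ᵥ ·) A) {B : ℕ} (hB : ∀ γ ∈ A, (e ⬝ᵥ γ).natAbs ≤ B)
    {v : EuclideanSpace ℝ (Fin n)} (hv : v ∈ tropAmoeba A ν) :
    ∃ z : Fin n → ℂ, (∀ i, z i ≠ 0) ∧ Wfam A ν t z = 0 ∧
      dist (LogMap z) (Real.log t • v) ≤
        Real.log (4 * (2 * B + 1) * 2 ^ (2 * B)) * ‖intVec e‖ := by
  have ht0 : 0 < t := one_pos.trans ht
  obtain ⟨α, hα, β, hβ, hαβ, htie, hmax⟩ := mem_tropAmoeba_iff.mp hv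
  set a : (Fin n → ℤ) → ℂ := fun γ => (if γ = 0 then -1 else 1) * ((t ^ tropTerm ν γ v : ℝ) : ℂ)
  have hnorm (γ : Fin n → ℤ) : ‖a γ‖ = t ^ tropTerm ν γ v := by
    have hsgn : ‖if γ = 0 then (-1 : ℂ) else 1‖ = 1 := by split_ifs <;> simp
    rw [norm_mul, hsgn, one_mul, Complex.norm_real, Real.norm_of_nonneg (by positivity)]
  obtain ⟨w, hw, hsum, hlog⟩ := exists_ne_zero_sum_mul_zpow_eq_zero he hB
    (Real.rpow_pos_of_pos ht0 (tropTerm ν α v))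
    (fun γ hγ => (hnorm γ).trans_le (Real.rpow_le_rpow_of_exponent_le ht.le (hmax γ hγ)))
    hα hβ hαβ (hnorm α) ((hnorm β).trans (by rw [htie]))
  refine ⟨fun i => ((t ^ v i : ℝ) : ℂ) * w ^ e i,
    fun i => mul_ne_zero (by exact_mod_cast (Real.rpow_pos_of_pos ht0 _).ne') (zpow_ne_zero _ hw),
    ?_, ?_⟩
  · rw [Wfam_eq_sum h0A hν, ← hsum]
    refine Finset.sum_congr rfl fun γ _ => ?_
    rw [laurentMonomial_ofReal_rpow_mul_zpow ht0 v hw]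
    simp only [a, tropTerm]
    rw [sub_eq_neg_add, Real.rpow_add ht0, Complex.ofReal_mul]
    ring
  · rw [logMap_ofReal_rpow_mul_zpow ht0 v hw, dist_eq_norm, add_sub_cancel_left, norm_smul,
      Real.norm_eq_abs]
    gcongr

end Amoeba

theorem statement1_general (n : ℕ) (A : Finset (Fin n → ℤ))
    (h0A : (0 : Fin n → ℤ) ∈ A) (ν : (Fin n → ℤ) → ℝ) (hν : ν 0 = 0) :
    ∀ ε > (0 : ℝ), ∃ t₀ > (1 : ℝ), ∀ t ≥ t₀,
      (∀ z : Fin n → ℂ, (∀ i, z i ≠ 0) → Wfam A ν t z = 0 →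
          ∃ v ∈ tropAmoeba A ν, dist (LogMap z) (Real.log t • v) ≤ ε * Real.log t) ∧
      (∀ v ∈ tropAmoeba A ν, ∃ z : Fin n → ℂ, (∀ i, z i ≠ 0) ∧ Wfam A ν t z = 0 ∧
          dist (LogMap z) (Real.log t • v) ≤ ε * Real.log t) := by
  intro ε hε
  obtain ⟨e, he⟩ := exists_injOn_dotProduct A
  set B := A.sup fun γ => (e ⬝ᵥ γ).natAbs
  obtain ⟨t₀, ht₀, hlog⟩ := exists_forall_ge_le_mul_log
    (max (Real.log A.card) (Real.log (4 * (2 * B + 1) * 2 ^ (2 * B)) * ‖intVec e‖)) hε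
  refine ⟨t₀, ht₀, fun t ht => ⟨fun z hz hW => ?_, fun v hv => ?_⟩⟩
  · obtain ⟨w, hw, hdist⟩ := exists_mem_tropAmoeba_dist_logMap_le h0A hν (ht₀.trans_le ht) hz hW
    exact ⟨w, hw, hdist.trans ((le_max_left _ _).trans (hlog t ht))⟩
  · obtain ⟨z, hz, hW, hdist⟩ := exists_Wfam_eq_zero_dist_logMap_le h0A hν (ht₀.trans_le ht) he
      (fun γ hγ => Finset.le_sup (f := fun γ => (e ⬝ᵥ γ).natAbs) hγ) hv
    exact ⟨z, hz, hW, hdist.trans ((le_max_right _ _).trans (hlog t ht))⟩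

/-- The rescaled amoebas `(1/log t)·𝒜_t` converge to the tropical
amoeba `Π_ν` in the Hausdorff sense. -/
theorem statement1 (n : ℕ) (hn : 1 ≤ n) (A : Finset (Fin n → ℤ))
    (h0A : (0 : Fin n → ℤ) ∈ A) (ν : (Fin n → ℤ) → ℝ) (hν : ν 0 = 0) :
    ∀ ε > (0 : ℝ), ∃ t₀ > (1 : ℝ), ∀ t ≥ t₀,
      (∀ z : Fin n → ℂ, (∀ i, z i ≠ 0) → Wfam A ν t z = 0 →
          ∃ v ∈ tropAmoeba A ν, dist (LogMap z) (Real.log t • v) ≤ ε * Real.log t) ∧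
      (∀ v ∈ tropAmoeba A ν, ∃ z : Fin n → ℂ, (∀ i, z i ≠ 0) ∧ Wfam A ν t z = 0 ∧
          dist (LogMap z) (Real.log t • v) ≤ ε * Real.log t) :=
  statement1_general n A h0A ν hν
end

section
/- Let n ≥ 1 and let A, ν, W_t, 𝒜_t, Π_ν and the (n−2)-skeleton S be as in the context, and let ε > 0. Then there exist positive constants K, c and t₀ > 1 such that for all t ≥ t₀: every point u ∈ 𝒜_t whose Euclidean distance from every point of (log t)·S = {(log t)·s : s ∈ S} is at least ε·log t lies within Euclidean distance K·t^{−c} of the set (log t)·Π_ν. (Away from a neighbourhood of the (n−2)-skeleton of the tropical amoeba, the amoeba 𝒜_t is within distance a constant multiple of a negative power of t of the rescaled tropical amoeba.) -/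
open scoped BigOperators

/-- The `(n-2)`-skeleton of `Π_ν`: points where the maximum is attained
by at least three elements of `A`. -/
def tropSkeleton {n : ℕ} (A : Finset (Fin n → ℤ)) (ν : (Fin n → ℤ) → ℝ) :
    Set (EuclideanSpace ℝ (Fin n)) :=
  {u | ∃ α ∈ A, ∃ β ∈ A, ∃ γ ∈ A, α ≠ β ∧ α ≠ γ ∧ β ≠ γ ∧
      (∑ i, u i * (α i : ℝ)) - ν α = (∑ i, u i * (β i : ℝ)) - ν β ∧
      (∑ i, u i * (α i : ℝ)) - ν α = (∑ i, u i * (γ i : ℝ)) - ν γ ∧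
      ∀ δ ∈ A, (∑ i, u i * (δ i : ℝ)) - ν δ ≤ (∑ i, u i * (α i : ℝ)) - ν α}

/-!
Put `u = Log z / log t`. The term `t^{-ν(α)} z^α` of `W_t` has modulus `exp (log t · φ_α(u))`
with `φ_α(u) = ⟨u, α⟩ - ν(α)`, and since the terms sum to zero the largest one is at most the sum
of the others. Away from the skeleton the third largest value of `φ_α(u)` lies a fixed `θ > 0`
below the largest: otherwise a nearby tie of two monomials could be pushed, inside the hyperplane
of that tie, to a tie of three, at a distance controlled by finitely many triples of exponents.
Hence the two largest terms dominate, their exponents differ by `O(t^{-θ} / log t)`, and moving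
`u` that far towards the tie lands on `Π_ν`.
-/

open scoped RealInnerProductSpace
open Filter Topology Real

section InnerProductSpace

variable {E : Type*} [NormedAddCommGroup E] [InnerProductSpace ℝ E]

theorem exists_inner_eq_zero_and_inner_eq_one_of_notMem_span {w x : E} (hx : x ∉ ℝ ∙ w) :
    ∃ d, ⟪d, w⟫ = 0 ∧ ⟪d, x⟫ = 1 := by
  rw [← Submodule.orthogonal_orthogonal (ℝ ∙ w), Submodule.mem_orthogonal] at hx
  obtain ⟨d, hd, hdx⟩ := not_forall₂.mp hx
  refine ⟨⟪d, x⟫⁻¹ • d, ?_, ?_⟩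
  · rw [real_inner_smul_left, Submodule.mem_orthogonal_singleton_iff_inner_left.mp hd, mul_zero]
  · rw [real_inner_smul_left, inv_mul_cancel₀ hdx]

end InnerProductSpace

theorem norm_le_sum_norm_erase_of_sum_eq_zero {ι E : Type*} [DecidableEq ι]
    [SeminormedAddCommGroup E] {s : Finset ι} {f : ι → E} (hf : ∑ i ∈ s, f i = 0) {j : ι}
    (hj : j ∈ s) : ‖f j‖ ≤ ∑ i ∈ s.erase j, ‖f i‖ := by
  rw [← Finset.add_sum_erase s f hj, add_eq_zero_iff_eq_neg] at hf
  rw [hf, norm_neg]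
  exact norm_sum_le _ _

theorem exists_eq_sup_of_continuous {ι : Type*} {B : Finset ι} {g : ℝ → ℝ} {f : ι → ℝ → ℝ}
    (hg : Continuous g) (hf : ∀ i ∈ B, Continuous (f i)) {S : ℝ} (hS : 0 ≤ S)
    (h0 : ∀ i ∈ B, f i 0 ≤ g 0) {β : ι} (hβ : β ∈ B) (hβS : g S ≤ f β S) :
    ∃ s ∈ Set.Icc 0 S, ∃ μ ∈ B, f μ s = g s ∧ ∀ i ∈ B, f i s ≤ g s := by
  have hB : B.Nonempty := ⟨β, hβ⟩
  have hcont : Continuous fun s => g s - B.sup' hB (f · s) :=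
    hg.sub (Continuous.finset_sup'_apply hB hf)
  obtain ⟨s, hs, hs0⟩ : ∃ s ∈ Set.Icc 0 S, g s - B.sup' hB (f · s) = 0 :=
    intermediate_value_Icc' hS hcont.continuousOn
      ⟨sub_nonpos.mpr (hβS.trans (B.le_sup' (f · S) hβ)), sub_nonneg.mpr (B.sup'_le hB _ h0)⟩
  obtain ⟨μ, hμ, hμs⟩ := B.exists_mem_eq_sup' hB (f · s)
  refine ⟨s, hs, μ, hμ, by linarith, fun i hi => ?_⟩
  linarith [B.le_sup' (f · s) hi]

theorem sub_le_of_exp_le_sum_exp {ι : Type*} [DecidableEq ι] {s : Finset ι} {x : ι → ℝ}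
    {i j : ι} {r N : ℝ} (hj : j ∈ s) (hsum : exp (x i) ≤ ∑ k ∈ s, exp (x k))
    (hrest : ∀ k ∈ s.erase j, x k ≤ x i - r) (hN : (s.card : ℝ) ≤ N)
    (hsmall : N * exp (-r) ≤ 1 / 2) :
    x i - x j ≤ 2 * (N * exp (-r)) := by
  set y := N * exp (-r)
  have hy : 0 ≤ y := mul_nonneg ((Nat.cast_nonneg _).trans hN) (exp_pos _).le
  have hrest_sum : ∑ k ∈ s.erase j, exp (x k) ≤ y * exp (x i) :=
    calc ∑ k ∈ s.erase j, exp (x k) ≤ ∑ _k ∈ s.erase j, exp (-r) * exp (x i) :=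
          Finset.sum_le_sum fun k hk => by
            rw [← exp_add]
            exact exp_le_exp.mpr (by linarith [hrest k hk])
      _ = (s.erase j).card * (exp (-r) * exp (x i)) := by rw [Finset.sum_const, nsmul_eq_mul]
      _ ≤ N * (exp (-r) * exp (x i)) := by
          gcongr
          exact (Nat.cast_le.mpr (Finset.card_erase_le)).trans hN
      _ = y * exp (x i) := by ring
  have hij : exp (x i) * (1 - y) ≤ exp (x j) := by
    rw [← Finset.add_sum_erase s _ hj] at hsum
    linarith
  -- `1 ≤ (1 - y) (1 + 2y) ≤ (1 - y) e^{2y}` for `0 ≤ y ≤ 1/2`.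
  have hexp : 1 ≤ (1 - y) * exp (2 * y) := by
    nlinarith [mul_le_mul_of_nonneg_left (add_one_le_exp (2 * y)) (by linarith : 0 ≤ 1 - y)]
  have : exp (x i) ≤ exp (x j + 2 * y) :=
    calc exp (x i) ≤ exp (x i) * ((1 - y) * exp (2 * y)) :=
          le_mul_of_one_le_right (exp_pos _).le hexp
      _ = exp (x i) * (1 - y) * exp (2 * y) := by ring
      _ ≤ exp (x j) * exp (2 * y) := by gcongr
      _ = exp (x j + 2 * y) := (exp_add _ _).symm
  linarith [exp_le_exp.mp this]

namespace TropicalAmoeba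

variable {n : ℕ} {A : Finset (Fin n → ℤ)} {ν : (Fin n → ℤ) → ℝ}

noncomputable def latticePoint (α : Fin n → ℤ) : EuclideanSpace ℝ (Fin n) :=
  WithLp.toLp 2 fun i => (α i : ℝ)

/-- The affine function `u ↦ ⟨u, α⟩ - ν(α)` whose maximum over `A` defines `Π_ν`. -/
noncomputable def tropMonomial (ν : (Fin n → ℤ) → ℝ) (α : Fin n → ℤ)
    (u : EuclideanSpace ℝ (Fin n)) : ℝ :=
  (∑ i, u i * (α i : ℝ)) - ν α

variable (ν) in
theorem tropMonomial_eq_inner (α : Fin n → ℤ) (u : EuclideanSpace ℝ (Fin n)) :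
    tropMonomial ν α u = ⟪u, latticePoint α⟫ - ν α := by
  simp [tropMonomial, latticePoint, PiLp.inner_apply, mul_comm]

variable (ν) in
@[fun_prop]
theorem continuous_tropMonomial (α : Fin n → ℤ) : Continuous (tropMonomial ν α) := by
  rw [funext (tropMonomial_eq_inner ν α)]
  fun_prop

theorem tropMonomial_add_smul (α : Fin n → ℤ) (u d : EuclideanSpace ℝ (Fin n)) (s : ℝ) :
    tropMonomial ν α (u + s • d) = tropMonomial ν α u + s * ⟪d, latticePoint α⟫ := by
  simp only [tropMonomial_eq_inner, inner_add_left, real_inner_smul_left]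
  ring

theorem abs_tropMonomial_sub_le (α : Fin n → ℤ) (u v : EuclideanSpace ℝ (Fin n)) :
    |tropMonomial ν α v - tropMonomial ν α u| ≤ ‖latticePoint α‖ * dist u v := by
  rw [tropMonomial_eq_inner, tropMonomial_eq_inner, sub_sub_sub_cancel_right, ← inner_sub_left,
    dist_comm, dist_eq_norm, mul_comm]
  exact abs_real_inner_le_norm _ _

theorem one_le_norm_latticePoint_sub {α β : Fin n → ℤ} (h : α ≠ β) :
    1 ≤ ‖latticePoint α - latticePoint β‖ := by
  obtain ⟨i, hi⟩ := Function.ne_iff.mp h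
  calc (1 : ℝ) ≤ |((α i - β i : ℤ) : ℝ)| := by exact_mod_cast Int.one_le_abs (sub_ne_zero.mpr hi)
    _ = ‖(latticePoint α - latticePoint β) i‖ := by simp [latticePoint]
    _ ≤ ‖latticePoint α - latticePoint β‖ := PiLp.norm_apply_le _ _

theorem exists_tie_dist_le {u : EuclideanSpace ℝ (Fin n)} {α β : Fin n → ℤ} (hβ : β ∈ A)
    (hβα : β ≠ α) {δ : ℝ} (hδ : 0 ≤ δ)
    (hmax : ∀ γ ∈ A, tropMonomial ν γ u ≤ tropMonomial ν α u)
    (hβδ : tropMonomial ν α u - δ ≤ tropMonomial ν β u) :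
    ∃ v, dist u v ≤ δ ∧ ∃ μ ∈ A, μ ≠ α ∧ tropMonomial ν μ v = tropMonomial ν α v ∧
      ∀ γ ∈ A, tropMonomial ν γ v ≤ tropMonomial ν α v := by
  set w := latticePoint β - latticePoint α
  have hw : 1 ≤ ‖w‖ := one_le_norm_latticePoint_sub hβα
  set d := ‖w‖⁻¹ • w
  have hd : ‖d‖ = 1 := by
    rw [norm_smul, norm_inv, norm_norm, inv_mul_cancel₀ (by positivity)]
  have hdw : ⟪d, latticePoint β⟫ = ⟪d, latticePoint α⟫ + ‖w‖ := by
    rw [← sub_eq_iff_eq_add', ← inner_sub_right, real_inner_smul_left, real_inner_self_eq_norm_sq]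
    field_simp
  obtain ⟨s, ⟨hs0, hsδ⟩, μ, hμ, htie, hle⟩ := exists_eq_sup_of_continuous (B := A.erase α)
    (g := fun s => tropMonomial ν α (u + s • d)) (f := fun γ s => tropMonomial ν γ (u + s • d))
    (by fun_prop) (fun γ _ => by fun_prop) hδ
    (fun γ hγ => by simpa using hmax γ (Finset.mem_of_mem_erase hγ))
    (Finset.mem_erase.mpr ⟨hβα, hβ⟩)
    (by simp only [tropMonomial_add_smul, hdw]; nlinarith)
  refine ⟨u + s • d, ?_, μ, Finset.mem_of_mem_erase hμ, Finset.ne_of_mem_erase hμ, htie,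
    fun γ hγ => ?_⟩
  · rwa [dist_self_add_right, norm_smul, hd, Real.norm_of_nonneg hs0, mul_one]
  · rcases eq_or_ne γ α with rfl | hγα
    · exact le_rfl
    · exact hle γ (Finset.mem_erase.mpr ⟨hγα, hγ⟩)

/-- If `β - α` is a multiple of `μ - α`, the gap between `α` and `β` is constant along the tie
of `α` and `μ`: either it vanishes there (and the tie lies in the skeleton) or it is bounded
away from zero. -/
theorem exists_dist_tropSkeleton_le_of_mem_span {α μ β : Fin n → ℤ} (hα : α ∈ A) (hμ : μ ∈ A)
    (hβ : β ∈ A) (hαμ : α ≠ μ) (hαβ : α ≠ β) (hμβ : μ ≠ β)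
    (hcol : latticePoint β - latticePoint α ∈ ℝ ∙ (latticePoint μ - latticePoint α)) :
    ∃ C ≥ (0 : ℝ), ∃ η > (0 : ℝ), ∀ v, tropMonomial ν μ v = tropMonomial ν α v →
      (∀ γ ∈ A, tropMonomial ν γ v ≤ tropMonomial ν α v) →
      tropMonomial ν α v - tropMonomial ν β v < η →
      ∃ w ∈ tropSkeleton A ν, dist v w ≤ C * (tropMonomial ν α v - tropMonomial ν β v) := by
  obtain ⟨κ, hκ⟩ := Submodule.mem_span_singleton.mp hcol
  set c := κ * (ν μ - ν α) - (ν β - ν α)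
  have hgap : ∀ v, tropMonomial ν μ v = tropMonomial ν α v →
      tropMonomial ν α v - tropMonomial ν β v = -c := by
    intro v hv
    have hlin : ⟪v, latticePoint β⟫ - ⟪v, latticePoint α⟫ =
        κ * (⟪v, latticePoint μ⟫ - ⟪v, latticePoint α⟫) := by
      rw [← inner_sub_right, ← hκ, real_inner_smul_right, inner_sub_right]
    simp only [tropMonomial_eq_inner] at hv ⊢
    linear_combination -hlin - κ * hv
  by_cases hc : c = 0
  · refine ⟨0, le_rfl, 1, one_pos, fun v htie hmax _ => ⟨v, ?_, by simp⟩⟩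
    have hαβv : tropMonomial ν α v = tropMonomial ν β v := by linarith [hgap v htie]
    exact ⟨α, hα, μ, hμ, β, hβ, hαμ, hαβ, hμβ, htie.symm, hαβv, hmax⟩
  · refine ⟨0, le_rfl, |c|, abs_pos.mpr hc, fun v htie hmax hlt => absurd hlt ?_⟩
    have hβv := hmax β hβ
    rw [hgap v htie, abs_of_nonpos (by linarith [hgap v htie])]
    exact lt_irrefl _

/-- Otherwise there is a direction `d` along which `α` and `μ` stay tied while `β` gains on them
at unit rate; following it until a third monomial joins the tie reaches the skeleton. -/
theorem exists_dist_tropSkeleton_le_of_notMem_span {α μ β : Fin n → ℤ} (hα : α ∈ A) (hμ : μ ∈ A)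
    (hβ : β ∈ A) (hαμ : α ≠ μ) (hαβ : α ≠ β) (hμβ : μ ≠ β)
    (hcol : latticePoint β - latticePoint α ∉ ℝ ∙ (latticePoint μ - latticePoint α)) :
    ∃ C ≥ (0 : ℝ), ∃ η > (0 : ℝ), ∀ v, tropMonomial ν μ v = tropMonomial ν α v →
      (∀ γ ∈ A, tropMonomial ν γ v ≤ tropMonomial ν α v) →
      tropMonomial ν α v - tropMonomial ν β v < η →
      ∃ w ∈ tropSkeleton A ν, dist v w ≤ C * (tropMonomial ν α v - tropMonomial ν β v) := by
  obtain ⟨d, hdμ, hdβ⟩ := exists_inner_eq_zero_and_inner_eq_one_of_notMem_span hcol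
  rw [inner_sub_right, sub_eq_zero] at hdμ
  rw [inner_sub_right, sub_eq_iff_eq_add'] at hdβ
  refine ⟨‖d‖, norm_nonneg _, 1, one_pos, fun v htie hmax _ => ?_⟩
  set g := tropMonomial ν α v - tropMonomial ν β v
  have hg : 0 ≤ g := sub_nonneg.mpr (hmax β hβ)
  have htie' : ∀ s : ℝ, tropMonomial ν μ (v + s • d) = tropMonomial ν α (v + s • d) := by
    intro s
    rw [tropMonomial_add_smul, tropMonomial_add_smul, htie, hdμ]
  have hβB : β ∈ (A.erase α).erase μ :=
    Finset.mem_erase.mpr ⟨hμβ.symm, Finset.mem_erase.mpr ⟨hαβ.symm, hβ⟩⟩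
  obtain ⟨s, ⟨hs0, hsg⟩, ρ, hρ, htieρ, hle⟩ :=
    exists_eq_sup_of_continuous (B := (A.erase α).erase μ)
      (g := fun s => tropMonomial ν α (v + s • d)) (f := fun γ s => tropMonomial ν γ (v + s • d))
      (by fun_prop) (fun γ _ => by fun_prop) hg
      (fun γ hγ => by
        simpa using hmax γ (Finset.mem_of_mem_erase (Finset.mem_of_mem_erase hγ))) hβB
      (by simp only [tropMonomial_add_smul, hdβ]; linarith)
  obtain ⟨hρμ, hρα, hρA⟩ : ρ ≠ μ ∧ ρ ≠ α ∧ ρ ∈ A := by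
    simp only [Finset.mem_erase] at hρ
    exact ⟨hρ.1, hρ.2.1, hρ.2.2⟩
  refine ⟨v + s • d, ⟨α, hα, μ, hμ, ρ, hρA, hαμ, hρα.symm, hρμ.symm, (htie' s).symm,
    htieρ.symm, fun γ hγ => ?_⟩, ?_⟩
  · by_cases hγα : γ = α
    · exact hγα ▸ le_rfl
    by_cases hγμ : γ = μ
    · exact hγμ ▸ (htie' s).le
    exact hle γ (by simp [hγα, hγμ, hγ])
  · rw [dist_self_add_right, norm_smul, Real.norm_of_nonneg hs0, mul_comm]
    exact mul_le_mul_of_nonneg_left hsg (norm_nonneg _)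

theorem exists_dist_tropSkeleton_le {α μ β : Fin n → ℤ} (hα : α ∈ A) (hμ : μ ∈ A)
    (hβ : β ∈ A) (hαμ : α ≠ μ) (hαβ : α ≠ β) (hμβ : μ ≠ β) :
    ∃ C ≥ (0 : ℝ), ∃ η > (0 : ℝ), ∀ v, tropMonomial ν μ v = tropMonomial ν α v →
      (∀ γ ∈ A, tropMonomial ν γ v ≤ tropMonomial ν α v) →
      tropMonomial ν α v - tropMonomial ν β v < η →
      ∃ w ∈ tropSkeleton A ν, dist v w ≤ C * (tropMonomial ν α v - tropMonomial ν β v) := by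
  by_cases hcol : latticePoint β - latticePoint α ∈ ℝ ∙ (latticePoint μ - latticePoint α)
  · exact exists_dist_tropSkeleton_le_of_mem_span hα hμ hβ hαμ hαβ hμβ hcol
  · exact exists_dist_tropSkeleton_le_of_notMem_span hα hμ hβ hαμ hαβ hμβ hcol

variable (A ν) in
/-- Among the values of the tropical monomials at `u`, the third largest lies more than `θ` below
the largest. -/
def ThirdValueGap (θ : ℝ) (u : EuclideanSpace ℝ (Fin n)) : Prop :=
  ∀ α ∈ A, (∀ γ ∈ A, tropMonomial ν γ u ≤ tropMonomial ν α u) →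
    ∀ β ∈ A, ∀ γ ∈ A, β ≠ α → γ ≠ α → β ≠ γ →
      tropMonomial ν α u - θ ≤ tropMonomial ν β u → tropMonomial ν γ u < tropMonomial ν α u - θ

theorem eventually_exists_mem_tropSkeleton_dist_lt {R ε : ℝ} (hε : 0 < ε) {α μ β : Fin n → ℤ}
    (hα : α ∈ A) (hμ : μ ∈ A) (hβ : β ∈ A) (hαμ : α ≠ μ) (hαβ : α ≠ β) (hμβ : μ ≠ β) :
    ∀ᶠ θ in 𝓝[>] (0 : ℝ), ∀ v, tropMonomial ν μ v = tropMonomial ν α v →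
      (∀ γ ∈ A, tropMonomial ν γ v ≤ tropMonomial ν α v) →
      tropMonomial ν α v - tropMonomial ν β v ≤ (1 + 2 * R) * θ →
      ∃ w ∈ tropSkeleton A ν, dist v w < ε - θ := by
  obtain ⟨C, hC, η, hη, hCη⟩ := exists_dist_tropSkeleton_le hα hμ hβ hαμ hαβ hμβ
  have hgap_small : ∀ᶠ θ in 𝓝[>] (0 : ℝ), (1 + 2 * R) * θ < η :=
    (((by fun_prop : Continuous fun θ : ℝ => (1 + 2 * R) * θ).tendsto' 0 0 (by simp)).mono_left
      nhdsWithin_le_nhds).eventually_lt_const hη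
  have hdist_small : ∀ᶠ θ in 𝓝[>] (0 : ℝ), θ + C * ((1 + 2 * R) * θ) < ε :=
    (((by fun_prop : Continuous fun θ : ℝ => θ + C * ((1 + 2 * R) * θ)).tendsto' 0 0
      (by simp)).mono_left nhdsWithin_le_nhds).eventually_lt_const hε
  filter_upwards [hgap_small, hdist_small] with θ hθη hθε v htie hmax hgap
  obtain ⟨w, hw, hvw⟩ := hCη v htie hmax (by linarith)
  exact ⟨w, hw, by nlinarith [mul_le_mul_of_nonneg_left hgap hC]⟩

variable (A ν) in
theorem exists_pos_thirdValueGap {ε : ℝ} (hε : 0 < ε) :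
    ∃ θ > 0, ∀ u, (∀ s ∈ tropSkeleton A ν, ε ≤ dist u s) → ThirdValueGap A ν θ u := by
  set R := ∑ γ ∈ A, ‖latticePoint γ‖
  have hR : ∀ γ ∈ A, ‖latticePoint γ‖ ≤ R := fun γ hγ =>
    Finset.single_le_sum (fun _ _ => norm_nonneg _) hγ
  have hR0 : 0 ≤ R := Finset.sum_nonneg fun _ _ => norm_nonneg _
  have hall : ∀ᶠ θ in 𝓝[>] (0 : ℝ), ∀ α ∈ A, ∀ μ ∈ A, ∀ β ∈ A, α ≠ μ → α ≠ β → μ ≠ β →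
      ∀ v, tropMonomial ν μ v = tropMonomial ν α v →
        (∀ γ ∈ A, tropMonomial ν γ v ≤ tropMonomial ν α v) →
        tropMonomial ν α v - tropMonomial ν β v ≤ (1 + 2 * R) * θ →
        ∃ w ∈ tropSkeleton A ν, dist v w < ε - θ := by
    simp only [eventually_all_finset, eventually_imp_distrib_left]
    exact fun α hα μ hμ β hβ => eventually_exists_mem_tropSkeleton_dist_lt hε hα hμ hβ
  obtain ⟨θ, hθ, hθpos⟩ := (hall.and self_mem_nhdsWithin).exists
  refine ⟨θ, hθpos, fun u hfar α hα hmax β hβ γ hγ hβα hγα hβγ hβθ => ?_⟩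
  by_contra! hγθ
  obtain ⟨v, huv, μ, hμ, hμα, htie, hmaxv⟩ := exists_tie_dist_le hβ hβα hθpos.le hmax hβθ
  obtain ⟨ρ, hρ, hρα, hρμ, hρθ⟩ : ∃ ρ ∈ A, ρ ≠ α ∧ ρ ≠ μ ∧
      tropMonomial ν α u - θ ≤ tropMonomial ν ρ u := by
    by_cases hμβ : μ = β
    · exact ⟨γ, hγ, hγα, hμβ ▸ hβγ.symm, hγθ⟩
    · exact ⟨β, hβ, hβα, Ne.symm hμβ, hβθ⟩
  have hlip : ∀ γ ∈ A, |tropMonomial ν γ v - tropMonomial ν γ u| ≤ R * θ := fun γ hγ =>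
    (abs_tropMonomial_sub_le γ u v).trans (mul_le_mul (hR γ hγ) huv dist_nonneg hR0)
  have hgap : tropMonomial ν α v - tropMonomial ν ρ v ≤ (1 + 2 * R) * θ := by
    linarith [abs_le.mp (hlip α hα), abs_le.mp (hlip ρ hρ)]
  obtain ⟨w, hw, hvw⟩ := hθ α hα μ hμ ρ hρ hμα.symm hρα.symm hρμ.symm v htie hmaxv hgap
  linarith [hfar w hw, dist_triangle u v w]

theorem exists_mem_tropAmoeba_mul_dist_le {θ L : ℝ} {u : EuclideanSpace ℝ (Fin n)}
    (hgap : ThirdValueGap A ν θ u) (hA : A.Nonempty) (hL : 0 < L)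
    (hsum : ∀ α ∈ A, exp (L * tropMonomial ν α u) ≤
      ∑ γ ∈ A.erase α, exp (L * tropMonomial ν γ u))
    (hsmall : A.card * exp (-(L * θ)) ≤ 1 / 2) :
    ∃ v ∈ tropAmoeba A ν, L * dist u v ≤ 2 * (A.card * exp (-(L * θ))) := by
  obtain ⟨α, hα, hmax⟩ := A.exists_max_image (tropMonomial ν · u) hA
  have hne : (A.erase α).Nonempty := by
    rw [Finset.nonempty_iff_ne_empty]
    intro h
    have := hsum α hα
    rw [h, Finset.sum_empty] at this
    linarith [exp_pos (L * tropMonomial ν α u)]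
  obtain ⟨β, hβ, hβmax⟩ := (A.erase α).exists_max_image (tropMonomial ν · u) hne
  obtain ⟨hβα, hβA⟩ := Finset.mem_erase.mp hβ
  have hrest : ∀ γ ∈ (A.erase α).erase β,
      L * tropMonomial ν γ u ≤ L * tropMonomial ν α u - L * θ := by
    intro γ hγ
    rw [← mul_sub]
    gcongr
    by_cases hβθ : tropMonomial ν α u - θ ≤ tropMonomial ν β u
    · simp only [Finset.mem_erase] at hγ
      exact (hgap α hα hmax β hβA γ hγ.2.2 hβα hγ.2.1 (Ne.symm hγ.1) hβθ).le
    · exact (hβmax γ (Finset.mem_of_mem_erase hγ)).trans (not_le.mp hβθ).le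
  have hδ := sub_le_of_exp_le_sum_exp (x := fun γ => L * tropMonomial ν γ u) hβ (hsum α hα) hrest
    (by exact_mod_cast Finset.card_erase_le) hsmall
  obtain ⟨v, huv, μ, hμ, hμα, htie, hmaxv⟩ :=
    exists_tie_dist_le hβA hβα (sub_nonneg.mpr (hmax β hβA)) hmax (by linarith)
  refine ⟨v, ⟨α, hα, μ, hμ, hμα.symm, htie.symm, hmaxv⟩, ?_⟩
  calc L * dist u v ≤ L * (tropMonomial ν α u - tropMonomial ν β u) := by gcongr
    _ ≤ _ := by rw [mul_sub]; exact hδ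

/-- The coefficient of `z^α` in `W_t`, the constant term included. -/
noncomputable def wCoeff (ν : (Fin n → ℤ) → ℝ) (t : ℝ) (α : Fin n → ℤ) : ℂ :=
  if α = 0 then -1 else ((t ^ (-ν α) : ℝ) : ℂ)

theorem Wfam_eq_sum (h0A : (0 : Fin n → ℤ) ∈ A) (t : ℝ) (z : Fin n → ℂ) :
    Wfam A ν t z = ∑ α ∈ A, wCoeff ν t α * laurentMonomial α z := by
  rw [← Finset.add_sum_erase A _ h0A, Wfam, Finset.filter_ne']
  congr 1
  · simp [wCoeff, laurentMonomial]
  · refine Finset.sum_congr rfl fun α hα => ?_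
    rw [wCoeff, if_neg (Finset.ne_of_mem_erase hα)]

theorem norm_wCoeff (hν : ν 0 = 0) {t : ℝ} (ht : 0 < t) (α : Fin n → ℤ) :
    ‖wCoeff ν t α‖ = t ^ (-ν α) := by
  unfold wCoeff
  split_ifs with h
  · simp [h, hν]
  · rw [Complex.norm_real, Real.norm_of_nonneg (rpow_nonneg ht.le _)]

theorem norm_laurentMonomial {z : Fin n → ℂ} (hz : ∀ i, z i ≠ 0) (α : Fin n → ℤ) :
    ‖laurentMonomial α z‖ = exp (∑ i, LogMap z i * α i) := by
  rw [laurentMonomial, norm_prod, exp_sum]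
  refine Finset.prod_congr rfl fun i _ => ?_
  rw [norm_zpow, ← exp_log (zpow_pos (norm_pos_iff.mpr (hz i)) _), Real.log_zpow]
  simp [LogMap, mul_comm]

theorem norm_wCoeff_mul_laurentMonomial (hν : ν 0 = 0) {t : ℝ} (ht : 0 < t)
    {z : Fin n → ℂ} (hz : ∀ i, z i ≠ 0) {u : EuclideanSpace ℝ (Fin n)}
    (hu : LogMap z = Real.log t • u) (α : Fin n → ℤ) :
    ‖wCoeff ν t α * laurentMonomial α z‖ = exp (Real.log t * tropMonomial ν α u) := by
  rw [norm_mul, norm_wCoeff hν ht, norm_laurentMonomial hz, rpow_def_of_pos ht, ← exp_add, hu]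
  simp only [PiLp.smul_apply, smul_eq_mul, tropMonomial, mul_sub, Finset.mul_sum, mul_assoc]
  congr 1
  ring

theorem exp_le_sum_exp_of_Wfam_eq_zero (h0A : (0 : Fin n → ℤ) ∈ A) (hν : ν 0 = 0) {t : ℝ}
    (ht : 0 < t) {z : Fin n → ℂ} (hz : ∀ i, z i ≠ 0) (hW : Wfam A ν t z = 0)
    {u : EuclideanSpace ℝ (Fin n)} (hu : LogMap z = Real.log t • u) :
    ∀ α ∈ A, exp (Real.log t * tropMonomial ν α u) ≤
      ∑ γ ∈ A.erase α, exp (Real.log t * tropMonomial ν γ u) := by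
  intro α hα
  simp only [← norm_wCoeff_mul_laurentMonomial hν ht hz hu]
  exact norm_le_sum_norm_erase_of_sum_eq_zero (by rwa [← Wfam_eq_sum h0A]) hα

end TropicalAmoeba

open TropicalAmoeba

theorem statement2_general (n : ℕ) (A : Finset (Fin n → ℤ))
    (h0A : (0 : Fin n → ℤ) ∈ A) (ν : (Fin n → ℤ) → ℝ) (hν : ν 0 = 0)
    (ε : ℝ) (hε : 0 < ε) :
    ∃ K > (0 : ℝ), ∃ c > (0 : ℝ), ∃ t₀ > (1 : ℝ), ∀ t ≥ t₀,
      ∀ z : Fin n → ℂ, (∀ i, z i ≠ 0) → Wfam A ν t z = 0 →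
        (∀ s ∈ tropSkeleton A ν, ε * Real.log t ≤ dist (LogMap z) (Real.log t • s)) →
        ∃ v ∈ tropAmoeba A ν, dist (LogMap z) (Real.log t • v) ≤ K * t ^ (-c) := by
  obtain ⟨θ, hθ, hgap⟩ := exists_pos_thirdValueGap A ν hε
  have hA : (0 : ℝ) < A.card := by exact_mod_cast Finset.card_pos.mpr ⟨0, h0A⟩
  obtain ⟨t₀, ht₀⟩ := eventually_atTop.mp <|
    (by simpa using (tendsto_rpow_neg_atTop hθ).const_mul (A.card : ℝ) :
      Tendsto (fun t : ℝ => A.card * t ^ (-θ)) atTop (𝓝 0)).eventually_le_const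
      (by norm_num : (0 : ℝ) < 1 / 2)
  refine ⟨2 * A.card, by positivity, θ, hθ, max t₀ 2, by simp,
    fun t ht z hz hW hfar => ?_⟩
  have ht2 : 2 ≤ t := le_of_max_le_right ht
  have hL : 0 < Real.log t := Real.log_pos (by linarith)
  set u := (Real.log t)⁻¹ • LogMap z
  have hu : LogMap z = Real.log t • u := (smul_inv_smul₀ hL.ne' _).symm
  have hdist : ∀ w, dist (LogMap z) (Real.log t • w) = Real.log t * dist u w := fun w => by
    rw [hu, dist_smul₀, Real.norm_of_nonneg hL.le]
  have hfar' : ∀ s ∈ tropSkeleton A ν, ε ≤ dist u s := fun s hs =>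
    le_of_mul_le_mul_left (by rw [mul_comm, ← hdist]; exact hfar s hs) hL
  have hpow : exp (-(Real.log t * θ)) = t ^ (-θ) := by
    rw [rpow_def_of_pos (by linarith), neg_mul_eq_mul_neg]
  obtain ⟨v, hv, huv⟩ := exists_mem_tropAmoeba_mul_dist_le (hgap u hfar') ⟨0, h0A⟩ hL
    (exp_le_sum_exp_of_Wfam_eq_zero h0A hν (by linarith) hz hW hu)
    (by rw [hpow]; exact ht₀ t (le_of_max_le_left ht))
  exact ⟨v, hv, by rw [hdist, mul_assoc, ← hpow]; exact huv⟩

/-- Away from an `ε log t`-neighbourhood of the `(n-2)`-skeleton,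
the amoeba `𝒜_t` is within distance `K · t^{-c}` of the rescaled tropical amoeba. -/
theorem statement2 (n : ℕ) (hn : 1 ≤ n) (A : Finset (Fin n → ℤ))
    (h0A : (0 : Fin n → ℤ) ∈ A) (ν : (Fin n → ℤ) → ℝ) (hν : ν 0 = 0)
    (ε : ℝ) (hε : 0 < ε) :
    ∃ K > (0 : ℝ), ∃ c > (0 : ℝ), ∃ t₀ > (1 : ℝ), ∀ t ≥ t₀,
      ∀ z : Fin n → ℂ, (∀ i, z i ≠ 0) → Wfam A ν t z = 0 →
        (∀ s ∈ tropSkeleton A ν, ε * Real.log t ≤ dist (LogMap z) (Real.log t • s)) →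
        ∃ v ∈ tropAmoeba A ν, dist (LogMap z) (Real.log t • v) ≤ K * t ^ (-c) :=
  statement2_general n A h0A ν hν ε hε
end

section
/- Fix d ≥ 1 and r > 0, and let the cones C_j ⊆ ℝ^d and their translates C_j(r) be as in the context. Let U = {u₀ < u₁ < … < u_k} and W = {w₀ < w₁ < … < w_l} be nonempty subsets of {0, 1, …, d}. Then the intersection (⋂_{i=0}^{k} C_{u_i}) ∩ (⋂_{j=0}^{l} C_{w_j}(r)) is nonempty if and only if u_k ≤ w₀, i.e. if and only if the largest element of U is less than or equal to the smallest element of W. -/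
/-- For `x ∈ ℝ^d`, the extended coordinates `x̃₀ = 0` and `x̃ᵢ = xᵢ` for `1 ≤ i ≤ d`. -/
def tildeCoord {d : ℕ} (x : Fin d → ℝ) : Fin (d + 1) → ℝ :=
  Fin.cases 0 x

/-- The closed cone `C_j = {x ∈ ℝ^d : x̃ᵢ ≤ x̃ⱼ for all i}` of the subdivision `Π^d`. -/
def coneCell (d : ℕ) (j : Fin (d + 1)) : Set (Fin d → ℝ) :=
  {x | ∀ i, tildeCoord x i ≤ tildeCoord x j}

/-- The translation vector `v(r) = (-r/d, …, -r/2, -r)`. -/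
noncomputable def shiftVec (d : ℕ) (r : ℝ) : Fin d → ℝ :=
  fun i => -r / ((d : ℝ) - (i : ℕ))

/-- The translated cone `C_j(r) = v(r) + C_j` of the subdivision `Π^d(r)`. -/
def coneCellShift (d : ℕ) (r : ℝ) (j : Fin (d + 1)) : Set (Fin d → ℝ) :=
  {x | (fun i => x i - shiftVec d r i) ∈ coneCell d j}

noncomputable def epsVec (d : ℕ) (r : ℝ) : Fin (d + 1) → ℝ :=
  tildeCoord (fun i : Fin d => r / ((d : ℝ) - (i : ℕ)))

lemma epsVec_strictMono (d : ℕ) (r : ℝ) (hr : 0 < r) : StrictMono (epsVec d r) := by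
  intro i j hij
  induction j using Fin.cases with
  | zero => exact absurd hij (by simp [Fin.lt_def])
  | succ k =>
    have hk : ((k : ℕ) : ℝ) < (d : ℝ) := by exact_mod_cast k.isLt
    have hdk : (0 : ℝ) < (d : ℝ) - (k : ℕ) := by linarith
    induction i using Fin.cases with
    | zero =>
      simp only [epsVec, tildeCoord, Fin.cases_zero, Fin.cases_succ]
      positivity
    | succ l =>
      have hlk : (l : ℕ) < (k : ℕ) := Fin.succ_lt_succ_iff.mp hij
      have hlk' : ((l : ℕ) : ℝ) < ((k : ℕ) : ℝ) := by exact_mod_cast hlk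
      simp only [epsVec, tildeCoord, Fin.cases_succ]
      apply div_lt_div_of_pos_left hr hdk
      linarith

lemma tilde_sub (d : ℕ) (r : ℝ) (x : Fin d → ℝ) (j : Fin (d + 1)) :
    tildeCoord (fun i => x i - shiftVec d r i) j = tildeCoord x j + epsVec d r j := by
  induction j using Fin.cases with
  | zero => simp [tildeCoord, epsVec]
  | succ k =>
    simp only [tildeCoord, epsVec, Fin.cases_succ, shiftVec, neg_div]
    ring

lemma tilde_min (d : ℕ) (r : ℝ) (hr : 0 < r) (n : Fin (d + 1)) (j : Fin (d + 1)) :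
    tildeCoord (fun i : Fin d => min 0 (epsVec d r n - epsVec d r i.succ)) j
      = min 0 (epsVec d r n - epsVec d r j) := by
  induction j using Fin.cases with
  | zero =>
    have h0 : epsVec d r 0 = 0 := rfl
    have hn : (0:ℝ) ≤ epsVec d r n := by
      rcases eq_or_lt_of_le (Fin.zero_le n) with h | h
      · rw [← h, h0]
      · have := epsVec_strictMono d r hr h
        rw [h0] at this; linarith
    simp [tildeCoord, min_eq_left, h0, hn]
  | succ k =>
    simp [tildeCoord]

/-- For nonempty `U, W ⊆ {0, …, d}`, the intersection
`(⋂_{u ∈ U} C_u) ∩ (⋂_{w ∈ W} C_w(r))` is nonempty if and only if `max U ≤ min W`. -/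
theorem statement4 (d : ℕ) (hd : 1 ≤ d) (r : ℝ) (hr : 0 < r)
    (U W : Finset (Fin (d + 1))) (hU : U.Nonempty) (hW : W.Nonempty) :
    ((⋂ u ∈ U, coneCell d u) ∩ (⋂ w ∈ W, coneCellShift d r w)).Nonempty ↔
      U.max' hU ≤ W.min' hW := by
  have mono := (epsVec_strictMono d r hr).monotone
  constructor
  · rintro ⟨x, hx1, hx2⟩
    apply Finset.max'_le
    intro u hu
    apply Finset.le_min'
    intro w hw
    by_contra h
    push_neg at h
    have h1 : x ∈ coneCell d u := Set.mem_iInter₂.mp hx1 u hu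
    have h2 : x ∈ coneCellShift d r w := Set.mem_iInter₂.mp hx2 w hw
    have e1 : tildeCoord x w ≤ tildeCoord x u := h1 w
    have e2 := h2 u
    rw [tilde_sub, tilde_sub] at e2
    have := epsVec_strictMono d r hr h
    linarith
  · intro hle
    set n := W.min' hW with hn
    refine ⟨fun i : Fin d => min 0 (epsVec d r n - epsVec d r i.succ), ?_, ?_⟩
    · rw [Set.mem_iInter₂]
      intro u hu
      intro i
      rw [tilde_min d r hr, tilde_min d r hr]
      have hun : epsVec d r u ≤ epsVec d r n :=
        mono ((Finset.le_max' U u hu).trans hle)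
      rw [min_eq_left (by linarith : (0:ℝ) ≤ epsVec d r n - epsVec d r u)]
      exact min_le_left _ _
    · rw [Set.mem_iInter₂]
      intro w hw
      intro i
      rw [tilde_sub, tilde_sub, tilde_min d r hr, tilde_min d r hr]
      have hnw : epsVec d r n ≤ epsVec d r w := mono (Finset.min'_le W w hw)
      rw [min_eq_right (by linarith : epsVec d r n - epsVec d r w ≤ 0)]
      rcases le_total (0:ℝ) (epsVec d r n - epsVec d r i) with h | h
      · rw [min_eq_left h]; linarith
      · rw [min_eq_right h]; linarith
end

section
/- Let n ≥ 1, let h : ℝⁿ → ℝ be a convex (hence continuous) function, and let u : ℂ → ℂⁿ be continuous on the closed unit disc and holomorphic (complex differentiable) on the open unit disc, such that u maps the unit circle into the zero section ℝⁿ ⊆ ℂⁿ (i.e. every coordinate of u(z) is real for z on the unit circle). Suppose that h(Re(u(z))) ≤ 0 for every z in the closed unit disc, and that h(Re(u(z₀))) = 0 for some z₀ in the open unit disc. Then h(Re(u(z))) = 0 for every z in the closed unit disc. (No holomorphic curve with boundary on the zero section can touch the hypersurface {h∘Re = 0} from the interior of the region {h∘Re ≤ 0}.) -/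
/-!
The function `h ∘ Re` is convex on `ℂⁿ`, so its composite with a holomorphic disc is
subharmonic and cannot attain an interior maximum unless it is constant. Concretely: if
`h (Re u z) < 0` somewhere, Hahn–Banach separates the point `Re u z₀` from the open convex set
`{h < 0}` by a linear functional `g`, and the weak separation persists on its closure `{h ≤ 0}`.
Complexifying `g` gives a holomorphic function `G ∘ u` whose real part `g ∘ Re ∘ u` attains its
maximum at `z₀`, hence is constant, contradicting the strict separation at `z`.
-/

open Set Metric

section Sublevel

variable {E : Type*} [AddCommGroup E] [Module ℝ E] {h : E → ℝ} {r : ℝ}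

theorem ConvexOn.openSegment_subset_setOf_lt (hh : ConvexOn ℝ univ h) {x y : E}
    (hx : h x ≤ r) (hy : h y < r) : openSegment ℝ x y ⊆ {z | h z < r} := by
  rintro _ ⟨a, b, ha, hb, hab, rfl⟩
  calc h (a • x + b • y) ≤ a * h x + b * h y := hh.2 trivial trivial ha.le hb.le hab
    _ < a * r + b * r :=
      add_lt_add_of_le_of_lt (mul_le_mul_of_nonneg_left hx ha.le) (mul_lt_mul_of_pos_left hy hb)
    _ = r := by rw [← add_mul, hab, one_mul]

variable [TopologicalSpace E] [IsTopologicalAddGroup E] [ContinuousSMul ℝ E]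

theorem ConvexOn.setOf_le_subset_closure_setOf_lt (hh : ConvexOn ℝ univ h) {y : E}
    (hy : h y < r) : {x | h x ≤ r} ⊆ closure {x | h x < r} := fun x hx =>
  closure_mono (hh.openSegment_subset_setOf_lt hx hy)
    (segment_subset_closure_openSegment (left_mem_segment ℝ x y))

theorem ConvexOn.exists_strongDual_separating_sublevel [LocallyConvexSpace ℝ E]
    (hh : ConvexOn ℝ univ h) (hc : Continuous h) {x₀ y : E} (hx₀ : r ≤ h x₀) (hy : h y < r) :
    ∃ g : StrongDual ℝ E, g y < g x₀ ∧ ∀ x, h x ≤ r → g x ≤ g x₀ := by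
  have hconvex : Convex ℝ {x | h x < r} := by simpa using hh.convex_lt r
  obtain ⟨g, hg⟩ := geometric_hahn_banach_open_point hconvex
    (isOpen_lt hc continuous_const) (not_lt.2 hx₀)
  have hclosed : IsClosed {x | g x ≤ g x₀} := isClosed_le g.continuous continuous_const
  refine ⟨g, hg y hy, fun x hx => ?_⟩
  exact closure_minimal (fun v hv => (hg v hv).le) hclosed
    (hh.setOf_le_subset_closure_setOf_lt hy hx)

end Sublevel

theorem exists_clm_re_apply_eq {ι : Type*} [Fintype ι] (g : (ι → ℝ) →ₗ[ℝ] ℝ) :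
    ∃ G : (ι → ℂ) →L[ℂ] ℂ, ∀ z, (G z).re = g (fun i => (z i).re) := by
  classical
  refine ⟨∑ i, (g (Pi.single i 1) : ℂ) • ContinuousLinearMap.proj i, fun z => ?_⟩
  rw [LinearMap.pi_apply_eq_sum_univ g]
  simp only [Complex.re_sum, sum_apply, smul_apply,
    ContinuousLinearMap.proj_apply, smul_eq_mul, Complex.re_ofReal_mul]
  refine Finset.sum_congr rfl fun i _ => ?_
  rw [mul_comm]
  congr 2
  ext j
  simp [Pi.single_apply, eq_comm]

theorem Complex.re_eqOn_closure_of_isPreconnected_of_isMaxOn {E : Type*}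
    [NormedAddCommGroup E] [NormedSpace ℂ E] {f : E → ℂ} {U : Set E} {c : E}
    (hc : IsPreconnected U) (ho : IsOpen U) (hd : DiffContOnCl ℂ f U) (hcU : c ∈ U)
    (hm : IsMaxOn (fun z => (f z).re) U c) :
    EqOn (fun z => (f z).re) (Function.const E (f c).re) (closure U) := by
  have hexp : DiffContOnCl ℂ (fun z => Complex.exp (f z)) U := ⟨hd.1.cexp, hd.2.cexp⟩
  -- `‖exp w‖ = exp (re w)` turns the real part into the modulus of a holomorphic function.
  have hm' : IsMaxOn (norm ∘ fun z => Complex.exp (f z)) U c := by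
    simpa [Function.comp_def, Complex.norm_exp] using hm.comp_mono Real.exp_monotone
  intro z hz
  simpa [Complex.norm_exp] using
    Complex.norm_eqOn_closure_of_isPreconnected_of_isMaxOn hc ho hexp hcU hm' hz

theorem statement6_general (n : ℕ) (h : (Fin n → ℝ) → ℝ)
    (hconv : ConvexOn ℝ Set.univ h)
    (u : ℂ → (Fin n → ℂ))
    (hcont : ContinuousOn u (Metric.closedBall 0 1))
    (hdiff : DifferentiableOn ℂ u (Metric.ball 0 1))
    (hle : ∀ z ∈ Metric.closedBall (0 : ℂ) 1, h (fun i => (u z i).re) ≤ 0)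
    (z₀ : ℂ) (hz₀ : z₀ ∈ Metric.ball (0 : ℂ) 1)
    (heq : h (fun i => (u z₀ i).re) = 0) :
    ∀ z ∈ Metric.closedBall (0 : ℂ) 1, h (fun i => (u z i).re) = 0 := by
  intro z hz
  by_contra hne
  have hc : Continuous h := continuousOn_univ.mp (hconv.continuousOn isOpen_univ)
  obtain ⟨g, hgz, hg⟩ := hconv.exists_strongDual_separating_sublevel hc heq.ge
    (lt_of_le_of_ne (hle z hz) hne)
  obtain ⟨G, hG⟩ := exists_clm_re_apply_eq (g : (Fin n → ℝ) →ₗ[ℝ] ℝ)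
  have hclosure : closure (ball (0 : ℂ) 1) = closedBall 0 1 := closure_ball 0 one_ne_zero
  have hGu : DiffContOnCl ℂ (G ∘ u) (ball 0 1) :=
    ⟨G.differentiable.comp_differentiableOn hdiff,
      hclosure ▸ G.continuous.comp_continuousOn hcont⟩
  have hmax : IsMaxOn (fun w => ((G ∘ u) w).re) (ball 0 1) z₀ := fun w hw => by
    simpa [hG] using hg _ (hle w (ball_subset_closedBall hw))
  have hconst := Complex.re_eqOn_closure_of_isPreconnected_of_isMaxOn
    (convex_ball (0 : ℂ) 1).isPreconnected isOpen_ball hGu hz₀ hmax (hclosure ▸ hz)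
  simp only [Function.comp_apply, hG, Function.const_apply] at hconst
  exact hgz.ne (by simpa using hconst)

/-- Maximum principle: no holomorphic curve with boundary on the zero
section can touch the level hypersurface `{h ∘ Re = 0}` of a convex function from the
interior of the region `{h ∘ Re ≤ 0}`. -/
theorem statement6 (n : ℕ) (hn : 1 ≤ n) (h : (Fin n → ℝ) → ℝ)
    (hconv : ConvexOn ℝ Set.univ h)
    (u : ℂ → (Fin n → ℂ))
    (hcont : ContinuousOn u (Metric.closedBall 0 1))
    (hdiff : DifferentiableOn ℂ u (Metric.ball 0 1))
    (hbdry : ∀ z ∈ Metric.sphere (0 : ℂ) 1, ∀ i, (u z i).im = 0)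
    (hle : ∀ z ∈ Metric.closedBall (0 : ℂ) 1, h (fun i => (u z i).re) ≤ 0)
    (z₀ : ℂ) (hz₀ : z₀ ∈ Metric.ball (0 : ℂ) 1)
    (heq : h (fun i => (u z₀ i).re) = 0) :
    ∀ z ∈ Metric.closedBall (0 : ℂ) 1, h (fun i => (u z i).re) = 0 :=
  statement6_general n h hconv u hcont hdiff hle z₀ hz₀ heq
end
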